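/- arXiv:2006.15856 — 2 statements merged into one kernel-verified Lean document; each statement's English description precedes it below -/
import Mathlib

section
/- For Re(s) > 2, the Dirichlet series of the generalized gcd-sum function satisfies Σ_{n≥1} h_b(n)/n^s = ζ(bs−1)ζ(s−1)/ζ(bs). -/
noncomputable def ggcd (b r s : ℕ) : ℕ := sSup {d : ℕ | 0 < d ∧ d ^ b ∣ r ∧ d ^ b ∣ s}

noncomputable def hgcd (b n : ℕ) : ℕ := ∑ j ∈ Finset.Icc 1 n, ggcd b j n

/-!
The divisors of `(j, n)_b` are exactly the `d` with `d ^ b ∣ j` and `d ^ b ∣ n`, so Gauss's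
identity `∑_{d ∣ m} φ d = m` gives `(j, n)_b = ∑_{d ^ b ∣ j, d ^ b ∣ n} φ d`. Summing over `j`,
`h_b n = ∑_{d ^ b ∣ n} φ d · n / d ^ b`, i.e. `h_b` is the Dirichlet convolution of `id` with the
function `d ^ b ↦ φ d` supported on `b`-th powers. The Dirichlet series of the latter is
`∑ φ d / d ^ (b s) = ζ(b s - 1) / ζ(b s)`, and that of `id` is `ζ(s - 1)`.
-/

open Finset LSeries
open scoped LSeries.notation Nat

theorem Nat.lcm_pow (a c b : ℕ) : Nat.lcm a c ^ b = Nat.lcm (a ^ b) (c ^ b) := by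
  rcases eq_or_ne a 0 with rfl | ha
  · rcases b with _ | b <;> simp
  rcases eq_or_ne c 0 with rfl | hc
  · rcases b with _ | b <;> simp
  refine Nat.eq_of_factorization_eq (pow_ne_zero _ (Nat.lcm_ne_zero ha hc))
    (Nat.lcm_ne_zero (pow_ne_zero _ ha) (pow_ne_zero _ hc)) fun p => ?_
  simp [Nat.factorization_lcm, ha, hc, Nat.factorization_pow, Nat.mul_max_mul_left]

/-- The arithmetic function `d ^ b ↦ f d`, vanishing off the `b`-th powers: the sum has at most
one term (and none for `k = 0`). -/
noncomputable def powExpand (b : ℕ) (f : ℕ → ℂ) (k : ℕ) : ℂ :=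
  ∑ d ∈ k.divisors with d ^ b = k, f d

section powExpand

variable {b : ℕ} (f : ℕ → ℂ)

theorem powExpand_pow (hb : b ≠ 0) {d : ℕ} (hd : d ≠ 0) : powExpand b f (d ^ b) = f d := by
  rw [powExpand, sum_eq_single_of_mem d]
  · simp [Nat.mem_divisors, dvd_pow_self d hb, hd]
  · exact fun e he hed => absurd (Nat.pow_left_injective hb (mem_filter.mp he).2) hed

theorem powExpand_of_notMem_range {k : ℕ} (hk : k ∉ Set.range (· ^ b)) :
    powExpand b f k = 0 :=
  sum_eq_zero fun d hd => absurd ⟨d, (mem_filter.mp hd).2⟩ hk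

theorem powExpand_convolution_apply (hb : b ≠ 0) (g : ℕ → ℂ) (n : ℕ) :
    (powExpand b f ⍟ g) n = ∑ d ∈ n.divisors with d ^ b ∣ n, f d * g (n / d ^ b) := by
  calc (powExpand b f ⍟ g) n = ∑ k ∈ n.divisors, powExpand b f k * g (n / k) := by
        rw [convolution_def]
        exact Nat.sum_divisorsAntidiagonal fun k m => powExpand b f k * g m
    _ = ∑ k ∈ {d ∈ n.divisors | d ^ b ∣ n}.image (· ^ b), powExpand b f k * g (n / k) := by
        refine (sum_subset (fun k hk => ?_) fun k hk hk' => ?_).symm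
        · obtain ⟨d, hd, rfl⟩ := mem_image.mp hk
          simp_all [Nat.mem_divisors]
        · rw [powExpand_of_notMem_range f, zero_mul]
          rintro ⟨d, rfl⟩
          refine hk' (mem_image.mpr ⟨d, ?_, rfl⟩)
          simp_all [Nat.mem_divisors, (dvd_pow_self d hb).trans]
    _ = _ := by
        rw [sum_image (Nat.pow_left_injective hb).injOn]
        refine sum_congr rfl fun d hd => ?_
        rw [powExpand_pow f hb (Nat.pos_of_mem_divisors (mem_filter.mp hd).1).ne']

theorem term_powExpand_pow (hb : b ≠ 0) (s : ℂ) (d : ℕ) :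
    term (powExpand b f) s (d ^ b) = term f (b * s) d := by
  rcases eq_or_ne d 0 with rfl | hd
  · simp [zero_pow hb]
  rw [term_of_ne_zero (pow_ne_zero b hd), term_of_ne_zero hd, powExpand_pow f hb hd,
    Nat.cast_pow, Complex.natCast_cpow_natCast_mul]

theorem term_powExpand_of_notMem_range (s : ℂ) {k : ℕ} (hk : k ∉ Set.range (· ^ b)) :
    term (powExpand b f) s k = 0 := by
  simp [term_def, powExpand_of_notMem_range f hk]

theorem LSeries_powExpand (hb : b ≠ 0) (s : ℂ) :
    LSeries (powExpand b f) s = LSeries f (b * s) := by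
  rw [LSeries, ← (Nat.pow_left_injective hb).tsum_eq fun k hk =>
    not_not.mp fun h => hk (term_powExpand_of_notMem_range f s h)]
  exact tsum_congr (term_powExpand_pow f hb s)

theorem LSeriesSummable_powExpand_iff (hb : b ≠ 0) (s : ℂ) :
    LSeriesSummable (powExpand b f) s ↔ LSeriesSummable f (b * s) := by
  rw [LSeriesSummable, ← (Nat.pow_left_injective hb).summable_iff
    fun k hk => term_powExpand_of_notMem_range f s hk]
  exact summable_congr (term_powExpand_pow f hb s)

end powExpand

theorem LSeries_eq_tsum_pnat (f : ℕ → ℂ) (s : ℂ) :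
    LSeries f s = ∑' n : ℕ+, f n / (n : ℂ) ^ s := by
  rw [LSeries, ← tsum_pnat_eq_tsum_of_eq_zero (term_zero f s)]
  exact tsum_congr fun n => term_of_ne_zero n.ne_zero f s

theorem term_natCast (s : ℂ) : term (fun n => (n : ℂ)) s = term 1 (s - 1) := by
  ext n
  rcases eq_or_ne n 0 with rfl | hn
  · simp
  rw [term_of_ne_zero hn, term_of_ne_zero hn, Complex.cpow_sub _ _ (Nat.cast_ne_zero.mpr hn),
    Complex.cpow_one, Pi.one_apply, one_div_div]

theorem LSeries_natCast {s : ℂ} (hs : 2 < s.re) :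
    LSeries (fun n => (n : ℂ)) s = riemannZeta (s - 1) := by
  rw [LSeries, term_natCast, ← LSeries, LSeries_one_eq_riemannZeta (by rw [Complex.sub_re, Complex.one_re]; linarith)]

theorem LSeriesSummable_natCast {s : ℂ} (hs : 2 < s.re) :
    LSeriesSummable (fun n => (n : ℂ)) s := by
  rw [LSeriesSummable, term_natCast, ← LSeriesSummable, LSeriesSummable_one_iff, Complex.sub_re, Complex.one_re]
  linarith

theorem LSeriesSummable_totient {s : ℂ} (hs : 2 < s.re) :
    LSeriesSummable (fun n => (φ n : ℂ)) s :=
  LSeriesSummable_of_le_const_mul_rpow hs ⟨1, fun n _ => by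
    rw [one_mul, show (2 : ℝ) - 1 = 1 by norm_num, Real.rpow_one, Complex.norm_natCast]
    exact_mod_cast Nat.totient_le n⟩

theorem one_convolution_totient : (1 : ℕ → ℂ) ⍟ (fun n => (φ n : ℂ)) = fun n : ℕ => (n : ℂ) := by
  ext n
  rw [convolution_def]
  simp only [Pi.one_apply, one_mul]
  rw [Nat.sum_divisorsAntidiagonal' fun _ m => (φ m : ℂ), ← Nat.cast_sum, Nat.sum_totient]

theorem LSeries_totient {s : ℂ} (hs : 2 < s.re) :
    LSeries (fun n => (φ n : ℂ)) s = riemannZeta (s - 1) / riemannZeta s := by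
  have hs1 : 1 < s.re := by linarith
  rw [eq_div_iff (riemannZeta_ne_zero_of_one_lt_re hs1), ← LSeries_natCast hs,
    ← one_convolution_totient, LSeries_convolution' (LSeriesSummable_one_iff.mpr hs1)
      (LSeriesSummable_totient hs), LSeries_one_eq_riemannZeta hs1, mul_comm]

theorem dvd_ggcd_iff {b j n : ℕ} (hb : b ≠ 0) (hn : n ≠ 0) (d : ℕ) :
    d ∣ ggcd b j n ↔ d ^ b ∣ j ∧ d ^ b ∣ n := by
  set S := {d : ℕ | 0 < d ∧ d ^ b ∣ j ∧ d ^ b ∣ n}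
  have hbdd : BddAbove S := ⟨n, fun d hd =>
    (Nat.le_self_pow hb d).trans (Nat.le_of_dvd (Nat.pos_of_ne_zero hn) hd.2.2)⟩
  obtain ⟨hg, hgj, hgn⟩ : ggcd b j n ∈ S := Nat.sSup_mem ⟨1, one_pos, by simp⟩ hbdd
  constructor
  · intro hd
    exact ⟨(pow_dvd_pow_of_dvd hd b).trans hgj, (pow_dvd_pow_of_dvd hd b).trans hgn⟩
  · rintro ⟨hdj, hdn⟩
    have hd : d ≠ 0 := by rintro rfl; simp [zero_pow hb, hn] at hdn
    -- `S` is closed under `lcm`, so its maximum is a multiple of every element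
    have hl : Nat.lcm d (ggcd b j n) ∈ S := by
      refine ⟨Nat.pos_of_ne_zero (Nat.lcm_ne_zero hd hg.ne'), ?_, ?_⟩ <;> rw [Nat.lcm_pow]
      exacts [Nat.lcm_dvd hdj hgj, Nat.lcm_dvd hdn hgn]
    have hlcm : Nat.lcm d (ggcd b j n) = ggcd b j n :=
      le_antisymm (le_csSup hbdd hl) (Nat.le_of_dvd hl.1 (Nat.dvd_lcm_right _ _))
    exact hlcm ▸ Nat.dvd_lcm_left _ _

theorem ggcd_eq_sum_totient {b j n : ℕ} (hb : b ≠ 0) (hn : n ≠ 0) :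
    ggcd b j n = ∑ d ∈ n.divisors with d ^ b ∣ j ∧ d ^ b ∣ n, φ d := by
  have hg : ggcd b j n ≠ 0 := fun h => by
    simpa [zero_pow hb, hn] using ((dvd_ggcd_iff hb hn 0).mp (by rw [h])).2
  rw [← Nat.sum_totient (ggcd b j n)]
  refine sum_congr (ext fun d => ?_) fun _ _ => rfl
  simp only [Nat.mem_divisors, mem_filter, dvd_ggcd_iff hb hn, hg, hn, ne_eq,
    not_false_eq_true, and_true]
  exact ⟨fun h => ⟨(dvd_pow_self d hb).trans h.2, h⟩, And.right⟩

theorem hgcd_eq_sum {b : ℕ} (hb : b ≠ 0) (n : ℕ) :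
    hgcd b n = ∑ d ∈ n.divisors with d ^ b ∣ n, φ d * (n / d ^ b) := by
  rcases eq_or_ne n 0 with rfl | hn
  · simp [hgcd]
  calc hgcd b n = ∑ j ∈ Icc 1 n, ∑ d ∈ n.divisors with d ^ b ∣ j ∧ d ^ b ∣ n, φ d :=
        sum_congr rfl fun j _ => ggcd_eq_sum_totient hb hn
    _ = ∑ d ∈ n.divisors with d ^ b ∣ n, φ d * #{j ∈ Ioc 0 n | d ^ b ∣ j} := by
        simp only [sum_filter]
        rw [sum_comm, ← Icc_add_one_left_eq_Ioc, zero_add]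
        refine sum_congr rfl fun d _ => ?_
        split_ifs with h <;> simp [h, sum_ite, mul_comm]
    _ = _ := by simp only [Nat.Ioc_filter_dvd_card_eq_div]

theorem hgcd_eq_powExpand_totient_convolution {b : ℕ} (hb : b ≠ 0) :
    (fun n => (hgcd b n : ℂ)) = powExpand b (fun n => (φ n : ℂ)) ⍟ fun n => (n : ℂ) := by
  ext n
  rw [powExpand_convolution_apply _ hb, hgcd_eq_sum hb, Nat.cast_sum]
  simp only [Nat.cast_mul]

theorem hgcd_dirichlet_series (b : ℕ) (hb : 2 ≤ b) (s : ℂ) (hs : 2 < s.re) :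
    ∑' n : ℕ+, (hgcd b n : ℂ) / (n : ℂ) ^ s =
      riemannZeta ((b : ℂ) * s - 1) * riemannZeta (s - 1) / riemannZeta ((b : ℂ) * s) := by
  have hb0 : b ≠ 0 := by omega
  have hbs : 2 < ((b : ℂ) * s).re := by
    have hb' : (2 : ℝ) ≤ b := by exact_mod_cast hb
    simp only [Complex.mul_re, Complex.natCast_re, Complex.natCast_im, zero_mul, sub_zero]
    nlinarith
  have hφ : LSeriesSummable (powExpand b fun n => (φ n : ℂ)) s :=
    (LSeriesSummable_powExpand_iff _ hb0 s).mpr (LSeriesSummable_totient hbs)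
  rw [← LSeries_eq_tsum_pnat fun n => (hgcd b n : ℂ), hgcd_eq_powExpand_totient_convolution hb0,
    LSeries_convolution' hφ (LSeriesSummable_natCast hs), LSeries_powExpand _ hb0,
    LSeries_totient hbs, LSeries_natCast hs, div_mul_eq_mul_div]
end

section
/- The summatory function of Klee's totient satisfies Σ_{n ≤ x} φ_b(n) = x²/(2ζ(2b)) + O(x). -/
noncomputable def klee (b n : ℕ) : ℕ :=
  ((Finset.Icc 1 n).filter (fun k => ggcd b k n = 1)).card

/-!
If `r = ggcd b k n`, the `d` with `d ^ b ∣ k` and `d ^ b ∣ n` are exactly the divisors of `r`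
(the largest such `d` absorbs all others through `lcm`). Möbius inversion over the divisors of `r`
then gives `φ_b(n) = ∑_{d ^ b ∣ n} μ(d) (n / d ^ b)`, hence
`∑_{n ≤ x} φ_b(n) = ∑_d μ(d) T(x / d ^ b)` with `T(y) = ∑_{m ≤ y} m = y² / 2 + O(y)`.
The main terms sum to `x² / 2 · ∑_d μ(d) / d ^ {2b} = x² / (2 ζ(2b))`, and the errors are
bounded by `x ∑_d d ^ {-b} = O(x)` because `b ≥ 2`.
-/

open Finset ArithmeticFunction
open scoped ArithmeticFunction.Moebius ArithmeticFunction.zeta LSeries.notation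

section ggcd

variable {b k n : ℕ}

lemma bddAbove_ggcd_set (hb : b ≠ 0) (hk : k ≠ 0) :
    BddAbove {d : ℕ | 0 < d ∧ d ^ b ∣ k ∧ d ^ b ∣ n} :=
  ⟨k, fun d ⟨_, hdk, _⟩ =>
    (Nat.le_self_pow hb d).trans (Nat.le_of_dvd (Nat.pos_of_ne_zero hk) hdk)⟩

lemma ggcd_mem (hb : b ≠ 0) (hk : k ≠ 0) :
    ggcd b k n ∈ {d : ℕ | 0 < d ∧ d ^ b ∣ k ∧ d ^ b ∣ n} :=
  Nat.sSup_mem ⟨1, by simp⟩ (bddAbove_ggcd_set hb hk)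

theorem pow_dvd_and_pow_dvd_iff_dvd_ggcd (hb : b ≠ 0) (hk : k ≠ 0) {d : ℕ} :
    d ^ b ∣ k ∧ d ^ b ∣ n ↔ d ∣ ggcd b k n := by
  obtain ⟨hr, hrk, hrn⟩ := ggcd_mem (n := n) hb hk
  refine ⟨fun ⟨hdk, hdn⟩ => ?_, fun h => ⟨(pow_dvd_pow_of_dvd h b).trans hrk,
    (pow_dvd_pow_of_dvd h b).trans hrn⟩⟩
  have hd : 0 < d := Nat.pos_of_ne_zero fun h => hk (by simpa [h, hb] using hdk)
  have hl : 0 < Nat.lcm d (ggcd b k n) := Nat.lcm_pos hd hr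
  have hle : Nat.lcm d (ggcd b k n) ≤ ggcd b k n :=
    le_csSup (bddAbove_ggcd_set hb hk)
      ⟨hl, Nat.pow_lcm_pow ▸ Nat.lcm_dvd hdk hrk, Nat.pow_lcm_pow ▸ Nat.lcm_dvd hdn hrn⟩
  rw [← le_antisymm hle (Nat.le_of_dvd hl (Nat.dvd_lcm_right _ _))]
  exact Nat.dvd_lcm_left _ _

end ggcd

lemma sum_divisors_moebius (n : ℕ) : ∑ d ∈ n.divisors, (μ d : ℤ) = if n = 1 then 1 else 0 := by
  rw [← coe_zeta_mul_apply, coe_zeta_mul_moebius, one_apply]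

theorem klee_eq_sum_moebius {b n : ℕ} (hb : b ≠ 0) :
    (klee b n : ℤ) = ∑ d ∈ n.divisors with d ^ b ∣ n, μ d * (n / d ^ b : ℕ) := by
  have hterm : ∀ k ∈ Icc 1 n, (if ggcd b k n = 1 then 1 else 0 : ℤ) =
      ∑ d ∈ n.divisors with d ^ b ∣ n, if d ^ b ∣ k then μ d else 0 := by
    intro k hk
    rw [mem_Icc] at hk
    have hk0 : k ≠ 0 := by omega
    rw [← sum_divisors_moebius, ← sum_filter, filter_filter]
    refine sum_congr (ext fun d => ?_) fun _ _ => rfl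
    rw [Nat.mem_divisors, ← pow_dvd_and_pow_dvd_iff_dvd_ggcd hb hk0, mem_filter, Nat.mem_divisors]
    exact ⟨fun ⟨⟨hdk, hdn⟩, _⟩ => ⟨⟨(dvd_pow_self d hb).trans hdn, by omega⟩, hdn, hdk⟩,
      fun ⟨_, hdn, hdk⟩ => ⟨⟨hdk, hdn⟩, (ggcd_mem hb hk0).1.ne'⟩⟩
  calc (klee b n : ℤ) = ∑ k ∈ Icc 1 n, if ggcd b k n = 1 then 1 else 0 := by
        rw [klee, card_filter]; push_cast; rfl
    _ = ∑ k ∈ Icc 1 n, ∑ d ∈ n.divisors with d ^ b ∣ n, if d ^ b ∣ k then μ d else 0 :=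
        sum_congr rfl hterm
    _ = _ := by
        rw [sum_comm]
        refine sum_congr rfl fun d _ => ?_
        rw [← sum_filter, sum_const, show Icc 1 n = Ioc 0 n from Icc_add_one_left_eq_Ioc 0 n,
          Nat.Ioc_filter_dvd_card_eq_div, nsmul_eq_mul, mul_comm]

lemma sum_Icc_filter_dvd_div {q : ℕ} (hq : 0 < q) (N : ℕ) :
    ∑ n ∈ Icc 1 N with q ∣ n, n / q = ∑ m ∈ Icc 1 (N / q), m := by
  symm
  refine sum_nbij' (q * ·) (· / q) (fun m hm => ?_) (fun n hn => ?_) (fun m _ => ?_)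
    (fun n hn => ?_) (fun m _ => ?_)
  · simp only [mem_Icc, mem_filter] at hm ⊢
    exact ⟨⟨Nat.mul_pos hq hm.1, mul_comm q m ▸ (Nat.le_div_iff_mul_le hq).1 hm.2⟩,
      dvd_mul_right q m⟩
  · simp only [mem_Icc, mem_filter] at hn ⊢
    exact ⟨Nat.div_pos (Nat.le_of_dvd hn.1.1 hn.2) hq, Nat.div_le_div_right hn.1.2⟩
  · exact Nat.mul_div_cancel_left m hq
  · exact Nat.mul_div_cancel' (mem_filter.1 hn).2
  · exact (Nat.mul_div_cancel_left m hq).symm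

theorem sum_klee_eq {b : ℕ} (hb : b ≠ 0) (N : ℕ) :
    ∑ n ∈ Icc 1 N, (klee b n : ℤ) = ∑ d ∈ Icc 1 N, μ d * ∑ m ∈ Icc 1 (N / d ^ b), (m : ℤ) := by
  simp_rw [klee_eq_sum_moebius hb]
  rw [sum_comm' (t' := Icc 1 N) (s' := fun d => {n ∈ Icc 1 N | d ^ b ∣ n})]
  · refine sum_congr rfl fun d hd => ?_
    rw [← mul_sum, ← Nat.cast_sum, ← Nat.cast_sum,
      sum_Icc_filter_dvd_div (pow_pos (mem_Icc.1 hd).1 b) N]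
  · intro n d
    simp only [mem_filter, mem_Icc, Nat.mem_divisors]
    constructor
    · rintro ⟨hn, ⟨hdn, -⟩, hdbn⟩
      exact ⟨⟨hn, hdbn⟩, Nat.pos_of_dvd_of_pos hdn hn.1, (Nat.le_of_dvd hn.1 hdn).trans hn.2⟩
    · rintro ⟨⟨hn, hdbn⟩, -⟩
      exact ⟨hn, ⟨(dvd_pow_self d hb).trans hdbn, by omega⟩, hdbn⟩

lemma sum_Icc_one_natCast (M : ℕ) : ∑ m ∈ Icc 1 M, (m : ℝ) = M * (M + 1) / 2 := by
  induction M with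
  | zero => simp
  | succ M ih => rw [sum_Icc_succ_top (by omega), ih]; push_cast; ring

lemma abs_sum_Icc_floor_sub_sq_div_two_le {y : ℝ} (hy : 0 ≤ y) :
    |∑ m ∈ Icc 1 ⌊y⌋₊, (m : ℝ) - y ^ 2 / 2| ≤ y := by
  have h₁ := Nat.floor_le hy
  have h₂ := Nat.lt_floor_add_one y
  have h₀ : (0 : ℝ) ≤ ⌊y⌋₊ := Nat.cast_nonneg _
  rw [sum_Icc_one_natCast, abs_le]
  constructor <;> nlinarith

theorem abs_sum_mul_sum_Icc_div_pow_sub_le {a : ℕ → ℝ} (ha : ∀ d, |a d| ≤ 1) {b : ℕ}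
    (hb : 2 ≤ b) {x : ℝ} (hx : 0 ≤ x) :
    |∑ d ∈ Icc 1 ⌊x⌋₊, a d * ∑ m ∈ Icc 1 (⌊x⌋₊ / d ^ b), (m : ℝ) -
        x ^ 2 / 2 * ∑' d : ℕ, a d / (d : ℝ) ^ (2 * b)|
      ≤ (∑' d : ℕ, ((d : ℝ) ^ b)⁻¹) * x := by
  set N := ⌊x⌋₊
  have hfinite : HasSum (fun d => a d * ∑ m ∈ Icc 1 (N / d ^ b), (m : ℝ))
      (∑ d ∈ Icc 1 N, a d * ∑ m ∈ Icc 1 (N / d ^ b), (m : ℝ)) := by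
    refine hasSum_sum_of_ne_finset_zero fun d hd => ?_
    have : N / d ^ b = 0 := by
      rw [mem_Icc] at hd
      rcases Nat.eq_zero_or_pos d with rfl | hd₀
      · simp [zero_pow (by omega : b ≠ 0)]
      · exact Nat.div_eq_of_lt ((by omega : N < d).trans_le (Nat.le_self_pow (by omega) d))
    simp [this]
  have hsummable : Summable fun d : ℕ => a d / (d : ℝ) ^ (2 * b) := by
    refine (Real.summable_nat_pow_inv.2 (by omega : 1 < 2 * b)).of_norm_bounded fun d => ?_
    rw [Real.norm_eq_abs, abs_div, abs_pow, Nat.abs_cast, div_eq_mul_inv]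
    exact mul_le_of_le_one_left (by positivity) (ha d)
  have hbound := (Real.summable_nat_pow_inv.2 (by omega : 1 < b)).hasSum.mul_right x
  rw [← Real.norm_eq_abs]
  refine (hfinite.sub (hsummable.hasSum.mul_left (x ^ 2 / 2))).norm_le_of_bounded hbound
    fun d => ?_
  have hfloor : N / d ^ b = ⌊x / (d : ℝ) ^ b⌋₊ := by
    rw [← Nat.cast_pow, Nat.floor_div_natCast]
  have hsq : x ^ 2 / 2 * (a d / (d : ℝ) ^ (2 * b)) = a d * ((x / (d : ℝ) ^ b) ^ 2 / 2) := by
    rw [mul_comm 2 b, pow_mul]; ring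
  rw [hfloor, hsq, ← mul_sub, Real.norm_eq_abs, abs_mul]
  calc |a d| * |∑ m ∈ Icc 1 ⌊x / (d : ℝ) ^ b⌋₊, (m : ℝ) - (x / (d : ℝ) ^ b) ^ 2 / 2|
      ≤ 1 * (x / (d : ℝ) ^ b) :=
        mul_le_mul (ha d) (abs_sum_Icc_floor_sub_sq_div_two_le (by positivity)) (abs_nonneg _)
          zero_le_one
    _ = ((d : ℝ) ^ b)⁻¹ * x := by ring

lemma ofReal_tsum_moebius_div_pow {k : ℕ} (hk : 1 < k) :
    ((∑' d : ℕ, (μ d : ℝ) / (d : ℝ) ^ k : ℝ) : ℂ) = (riemannZeta k)⁻¹ := by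
  have hs : 1 < (k : ℂ).re := by simpa using hk
  have hL : L ↗μ k = (riemannZeta k)⁻¹ := eq_inv_of_mul_eq_one_right <| by
    rw [← LSeries_zeta_eq_riemannZeta hs]; exact LSeries_zeta_mul_Lseries_moebius hs
  rw [← hL, Complex.ofReal_tsum, LSeries]
  congr 1; funext d
  rcases eq_or_ne d 0 with rfl | hd
  · simp
  · simp [LSeries.term_of_ne_zero hd, Complex.cpow_natCast]

theorem klee_summatory (b : ℕ) (hb : 2 ≤ b) :
    (fun x : ℝ => (∑ n ∈ Finset.Icc 1 ⌊x⌋₊, (klee b n : ℂ)) -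
        (x : ℂ) ^ 2 / (2 * riemannZeta (2 * b)))
      =O[Filter.atTop] (fun x : ℝ => x) := by
  refine Asymptotics.IsBigO.of_bound (∑' d : ℕ, ((d : ℝ) ^ b)⁻¹) ?_
  filter_upwards [Filter.eventually_ge_atTop 0] with x hx
  have hsum : ∑ n ∈ Icc 1 ⌊x⌋₊, (klee b n : ℝ) =
      ∑ d ∈ Icc 1 ⌊x⌋₊, (μ d : ℝ) * ∑ m ∈ Icc 1 (⌊x⌋₊ / d ^ b), (m : ℝ) := by
    have h := congrArg (Int.cast : ℤ → ℝ) (sum_klee_eq (b := b) (by omega) ⌊x⌋₊)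
    push_cast at h
    exact h
  have hζ := ofReal_tsum_moebius_div_pow (k := 2 * b) (by omega)
  rw [Nat.cast_mul, Nat.cast_ofNat] at hζ
  have herr := abs_sum_mul_sum_Icc_div_pow_sub_le (a := fun d => (μ d : ℝ))
    (fun d => by exact_mod_cast abs_moebius_le_one) hb hx
  rw [← hsum] at herr
  have hcast : (∑ n ∈ Icc 1 ⌊x⌋₊, (klee b n : ℂ)) - (x : ℂ) ^ 2 / (2 * riemannZeta (2 * b)) =
      ((∑ n ∈ Icc 1 ⌊x⌋₊, (klee b n : ℝ) -
        x ^ 2 / 2 * ∑' d : ℕ, (μ d : ℝ) / (d : ℝ) ^ (2 * b) : ℝ) : ℂ) := by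
    rw [Complex.ofReal_sub, Complex.ofReal_mul, hζ]
    push_cast
    ring
  rw [hcast, Complex.norm_real, Real.norm_eq_abs, Real.norm_eq_abs x, abs_of_nonneg hx]
  exact herr
end
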